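/- arXiv:2007.08636 — 2 statements merged into one kernel-verified Lean document; each statement's English description precedes it below -/
import Mathlib

section
/- The ω-power of the language S₁ := {s ∈ 2^{<ω} nonempty : s(0) = 0, or there exists k with 1·0^k·1 a prefix of s} equals 2^ω \ {1 0^ω}; consequently S₁^∞ is open but not closed in 2^ω. -/
/-!
A nonempty binary word lies in `S₁` exactly when it starts with `0` or has a `1` after its first
letter. So the first block of any factorisation of `1 0^ω` is `1 0^k`, which is not in `S₁`.
Any other sequence can be factorised: with infinitely many `1`s, cut at `0` and at every other
`1`, so each block has a `1` strictly inside; with finitely many, take one long initial block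
(which is not `1 0^k` since the sequence is not `1 0^ω`) followed by single `0`s.
Finally `1 0^ω` is not isolated in Cantor space, so its complement is open but not closed.
-/

/-- `IsConcat w α` : the infinite word `α` is the concatenation `w 0 ++ w 1 ++ …`
of the sequence of finite words `w`. -/
def IsConcat {σ : Type*} (w : ℕ → List σ) (α : ℕ → σ) : Prop :=
  ∀ i k (h : k < (w i).length),
    α ((∑ j ∈ Finset.range i, (w j).length) + k) = (w i).get ⟨k, h⟩

/-- The ω-power `L^∞` of a finitary language `L`. -/
def omegaPower {σ : Type*} (L : Set (List σ)) : Set (ℕ → σ) :=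
  { α | ∃ w : ℕ → List σ, (∀ i, w i ∈ L) ∧ IsConcat w α }

open Filter Topology

theorem Pi.nhdsNE_neBot {ι X : Type*} [Infinite ι] [TopologicalSpace X] [Nontrivial X]
    (x : ι → X) : (𝓝[≠] x).NeBot := by
  classical
  choose y hy using fun i => exists_ne (x i)
  have hne : ∀ i, Function.update x i (y i) ≠ x := fun i h => hy i (by simpa using congrFun h i)
  have hlim : Tendsto (fun i => Function.update x i (y i)) cofinite (𝓝[≠] x) := by
    refine tendsto_nhdsWithin_iff.2 ⟨tendsto_pi_nhds.2 fun k => ?_, .of_forall hne⟩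
    refine tendsto_const_nhds.congr' ?_
    filter_upwards [eventually_cofinite_ne k] with i hik
    rw [Function.update_of_ne hik.symm]
  exact hlim.neBot

theorem isConcat_map_range' {σ : Type*} (α : ℕ → σ) {c : ℕ → ℕ} (hc : Monotone c)
    (h0 : c 0 = 0) : IsConcat (fun i => (List.range' (c i) (c (i + 1) - c i)).map α) α := by
  intro i k hk
  simp only [List.length_map, List.length_range', Finset.sum_range_tsub hc, h0,
    Nat.sub_zero, List.get_eq_getElem, List.getElem_map, List.getElem_range', Nat.one_mul]

theorem mem_omegaPower_of_cuts {σ : Type*} {L : Set (List σ)} {α : ℕ → σ} {c : ℕ → ℕ}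
    (hc : Monotone c) (h0 : c 0 = 0)
    (hL : ∀ i, (List.range' (c i) (c (i + 1) - c i)).map α ∈ L) : α ∈ omegaPower L :=
  ⟨_, hL, isConcat_map_range' α hc h0⟩

theorem IsConcat.apply_of_lt_length_zero {σ : Type*} {w : ℕ → List σ} {α : ℕ → σ}
    (h : IsConcat w α) {k : ℕ} (hk : k < (w 0).length) : α k = (w 0)[k] := by
  simpa using h 0 k hk

def S₁ : Set (List Bool) :=
  { s : List Bool | s ≠ [] ∧
      (s.head? = some false ∨
        ∃ k : ℕ, (true :: (List.replicate k false ++ [true])) <+: s) }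

theorem exists_replicate_false_append_true_prefix_iff (l : List Bool) :
    (∃ k, List.replicate k false ++ [true] <+: l) ↔ true ∈ l := by
  induction l with
  | nil => simp
  | cons b l ih =>
    cases b
    · refine ⟨fun ⟨k, hk⟩ => ?_, fun h => ?_⟩
      · cases k with
        | zero => simp at hk
        | succ k =>
          exact List.mem_cons_of_mem _ (ih.1 ⟨k, by simpa [List.replicate_succ] using hk⟩)
      · obtain ⟨k, hk⟩ := ih.2 (by simpa using h)
        exact ⟨k + 1, by simpa [List.replicate_succ] using hk⟩
    · exact ⟨fun _ => List.mem_cons_self, fun _ => ⟨0, by simp⟩⟩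

theorem nil_notMem_S₁ : [] ∉ S₁ := fun h => h.1 rfl

theorem cons_mem_S₁_iff {b : Bool} {l : List Bool} : b :: l ∈ S₁ ↔ b = false ∨ true ∈ l := by
  cases b <;> simp [S₁, List.cons_prefix_cons, exists_replicate_false_append_true_prefix_iff]

theorem map_range'_mem_S₁ {α : ℕ → Bool} {a b : ℕ} (hab : a < b)
    (h : α a = false ∨ ∃ m, a < m ∧ m < b ∧ α m = true) :
    (List.range' a (b - a)).map α ∈ S₁ := by
  obtain ⟨n, hn⟩ : ∃ n, b - a = n + 1 := ⟨b - a - 1, by omega⟩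
  rw [hn, List.range'_succ, List.map_cons, cons_mem_S₁_iff]
  refine h.imp id fun ⟨m, ham, hmb, hm⟩ =>
    List.mem_map.2 ⟨m, List.mem_range'_1.2 ⟨ham, by omega⟩, hm⟩

theorem mem_omegaPower_S₁_of_cuts {α : ℕ → Bool} {c : ℕ → ℕ} (h0 : c 0 = 0)
    (hc : ∀ i, c i < c (i + 1)) (hblock : ∀ i, α (c i) = false ∨
      ∃ m, c i < m ∧ m < c (i + 1) ∧ α m = true) : α ∈ omegaPower S₁ :=
  mem_omegaPower_of_cuts (strictMono_nat_of_lt_succ hc).monotone h0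
    fun i => map_range'_mem_S₁ (hc i) (hblock i)

theorem mem_omegaPower_S₁_of_infinite {α : ℕ → Bool} (h : {n | α n = true}.Infinite) :
    α ∈ omegaPower S₁ := by
  set t := Nat.nth (fun n => α n = true)
  have ht : StrictMono t := Nat.nth_strictMono h
  set c : ℕ → ℕ := fun i => if i = 0 then 0 else t (2 * i)
  have hc_le : ∀ i, c i ≤ t (2 * i) := fun i => by dsimp only [c]; split_ifs <;> simp
  have hc_succ : ∀ i, c (i + 1) = t (2 * i + 2) := fun i => if_neg i.succ_ne_zero
  have hlt : ∀ i, c i < t (2 * i + 1) ∧ t (2 * i + 1) < c (i + 1) := fun i =>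
    ⟨(hc_le i).trans_lt (ht (by omega)), (hc_succ i).symm ▸ ht (by omega)⟩
  exact mem_omegaPower_S₁_of_cuts rfl (fun i => (hlt i).1.trans (hlt i).2)
    fun i => Or.inr ⟨_, (hlt i).1, (hlt i).2, Nat.nth_mem_of_infinite h _⟩

theorem mem_omegaPower_S₁_of_finite {α : ℕ → Bool} (h : {n | α n = true}.Finite)
    (hα : α ≠ fun n : ℕ => if n = 0 then true else false) : α ∈ omegaPower S₁ := by
  obtain ⟨B, hB⟩ := h.bddAbove
  have hfalse : ∀ n, B < n → α n = false := fun n hn =>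
    Bool.eq_false_iff.2 fun hn' => (hB hn').not_gt hn
  refine mem_omegaPower_S₁_of_cuts (c := fun i => if i = 0 then 0 else B + i) rfl
    (fun i => by rcases i with _ | i <;> simp) fun i => ?_
  rcases i with _ | i
  · obtain ⟨n, hn⟩ := Function.ne_iff.1 hα
    rcases n with _ | n
    · exact Or.inl (by simpa using hn)
    · refine Or.inr ⟨n + 1, n.succ_pos, ?_, by simpa using hn⟩
      simpa using Nat.lt_succ_of_le (hB (show α (n + 1) = true by simpa using hn))
  · exact Or.inl (hfalse _ (by simp))

theorem ne_of_mem_omegaPower_S₁ {α : ℕ → Bool} (h : α ∈ omegaPower S₁) :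
    α ≠ fun n : ℕ => if n = 0 then true else false := by
  rintro rfl
  obtain ⟨w, hw, hconc⟩ := h
  have hw0 := hw 0
  rcases hw0_eq : w 0 with _ | ⟨b, l⟩
  · exact nil_notMem_S₁ (hw0_eq ▸ hw0)
  rcases cons_mem_S₁_iff.1 (hw0_eq ▸ hw0) with rfl | hl
  · simpa [hw0_eq] using hconc.apply_of_lt_length_zero (k := 0) (by simp [hw0_eq])
  · obtain ⟨j, hj, hlj⟩ := List.getElem_of_mem hl
    simpa [hw0_eq, hlj] using hconc.apply_of_lt_length_zero (k := j + 1) (by simp [hw0_eq, hj])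

theorem omegaPower_S₁ : omegaPower S₁ = {fun n : ℕ => if n = 0 then true else false}ᶜ := by
  refine Set.ext fun α => ⟨ne_of_mem_omegaPower_S₁, fun hα => ?_⟩
  rcases Set.finite_or_infinite {n | α n = true} with h | h
  exacts [mem_omegaPower_S₁_of_finite h hα, mem_omegaPower_S₁_of_infinite h]

/-- The ω-power of S₁ = {s nonempty : s begins with 0, or 1 0^k 1 is a prefix of s}
equals 2^ω \ {1 0^ω}; hence it is open but not closed (`false` = 0, `true` = 1). -/
theorem stmt7 :
    omegaPower { s : List Bool | s ≠ [] ∧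
        (s.head? = some false ∨
          ∃ k : ℕ, (true :: (List.replicate k false ++ [true])) <+: s) } =
      {fun n : ℕ => if n = 0 then true else false}ᶜ ∧
    IsOpen (({fun n : ℕ => if n = 0 then true else false}ᶜ : Set (ℕ → Bool))) ∧
    ¬ IsClosed (({fun n : ℕ => if n = 0 then true else false}ᶜ : Set (ℕ → Bool))) := by
  have := Pi.nhdsNE_neBot (fun n : ℕ => if n = 0 then true else false)
  exact ⟨omegaPower_S₁, isOpen_compl_singleton,
    isClosed_compl_iff.not.2 (not_isOpen_singleton _)⟩
end

section
/- If A ⊆ Σ_A^ω is the ω-power of a language L_A ⊆ Σ_A⁺ and h is the substitution sending each letter a ∈ Σ_A to the language L₃·a (with L₃ ⊆ Σ^{<ω} a fixed language over Σ = Σ_A ∪ {↢}), then h(L_A)^∞ = h̃(A), where h̃ is the induced substitution on ω-words; in particular the class of ω-powers is closed under the substitution operation a ↦ L₃·a. -/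
/-- Substitution applied to a finite word: the set of words obtained by
replacing each letter `a` by some word of `h a`. -/
def substWord {σA σ : Type*} (h : σA → Set (List σ)) : List σA → Set (List σ)
  | [] => {([] : List σ)}
  | a :: t => { u | ∃ x ∈ h a, ∃ y ∈ substWord h t, u = x ++ y }

/-- Substitution applied to a language. -/
def substLang {σA σ : Type*} (h : σA → Set (List σ)) (L : Set (List σA)) :
    Set (List σ) :=
  ⋃ w ∈ L, substWord h w

/-- The substitution induced on ω-words: `β ∈ h̃(A)` iff `β` is obtained from
some `α ∈ A` by replacing, letter by letter, each letter `α i` by a word of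
`h (α i)`. -/
def omegaSubst {σA σ : Type*} (h : σA → Set (List σ)) (A : Set (ℕ → σA)) :
    Set (ℕ → σ) :=
  { β | ∃ α ∈ A, ∃ v : ℕ → List σ, (∀ i, v i ∈ h (α i)) ∧ IsConcat v β }

/-!
Both sides are parametrised by the same data: an ω-word over `Σ a, h a` (letters paired with
a chosen substitute) cut into finite blocks whose letters form words of `L_A`. The first
components give an ω-word of `L_A^∞` and the second components its letter-wise image, while
flattening the substitutes block by block gives a factorisation into words of `h(L_A)`.
Because the words of `L_A` are nonempty, the blocks cover all positions, so regrouping a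
factorisation of the image in either direction describes the same ω-word.
-/

open Finset (range)

section OmegaWords

variable {τ τ' : Type*}

def flattenPrefix (w : ℕ → List τ) (n : ℕ) : List τ := ((List.range n).map w).flatten

def IsPrefixOf (l : List τ) (α : ℕ → τ) : Prop := ∀ k (hk : k < l.length), α k = l[k]

lemma le_sum_range_length {w : ℕ → List τ} (hw : ∀ i, w i ≠ []) (n : ℕ) :
    n ≤ ∑ j ∈ range n, (w j).length := by
  simpa using Finset.sum_le_sum fun j (_ : j ∈ range n) =>
    Nat.succ_le_of_lt (List.length_pos_iff.mpr (hw j))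

lemma flattenPrefix_succ (w : ℕ → List τ) (n : ℕ) :
    flattenPrefix w (n + 1) = flattenPrefix w n ++ w n := by
  simp [flattenPrefix, List.range_succ]

lemma length_flattenPrefix (w : ℕ → List τ) (n : ℕ) :
    (flattenPrefix w n).length = ∑ j ∈ range n, (w j).length := by
  induction n with
  | zero => simp [flattenPrefix]
  | succ n ih => rw [flattenPrefix_succ, List.length_append, ih, Finset.sum_range_succ]

lemma flattenPrefix_prefix (w : ℕ → List τ) {m n : ℕ} (hmn : m ≤ n) :
    flattenPrefix w m <+: flattenPrefix w n := by
  induction n, hmn using Nat.le_induction with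
  | base => exact List.prefix_refl _
  | succ n _ ih => exact ih.trans (flattenPrefix_succ w n ▸ List.prefix_append _ _)

lemma isPrefixOf_append {l₁ l₂ : List τ} {α : ℕ → τ} :
    IsPrefixOf (l₁ ++ l₂) α ↔
      IsPrefixOf l₁ α ∧ ∀ k (hk : k < l₂.length), α (l₁.length + k) = l₂[k] := by
  constructor
  · intro h
    refine ⟨fun k hk => ?_, fun k hk => ?_⟩
    · rw [h k (by simp; omega), List.getElem_append_left hk]
    · rw [h _ (by simp; omega), List.getElem_append_right (by omega)]
      simp
  · rintro ⟨h₁, h₂⟩ k hk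
    rw [List.getElem_append]
    split_ifs with hk₁
    · exact h₁ k hk₁
    · simpa [Nat.add_sub_cancel' (not_lt.mp hk₁)] using
        h₂ (k - l₁.length) (by simp at hk; omega)

lemma IsPrefixOf.of_prefix {l₁ l₂ : List τ} {α : ℕ → τ} (h : l₁ <+: l₂)
    (h₂ : IsPrefixOf l₂ α) : IsPrefixOf l₁ α := fun k hk =>
  (h₂ k (hk.trans_le h.length_le)).trans (h.getElem hk).symm

lemma IsPrefixOf.map_range_eq {l : List τ} {α : ℕ → τ} (h : IsPrefixOf l α) :
    (List.range l.length).map α = l :=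
  List.ext_getElem (by simp) fun k _ hk => by simpa using h k hk

lemma isConcat_iff_isPrefixOf {w : ℕ → List τ} {α : ℕ → τ} :
    IsConcat w α ↔ ∀ n, IsPrefixOf (flattenPrefix w n) α := by
  simp only [IsConcat, List.get_eq_getElem, ← length_flattenPrefix]
  constructor
  · intro h n
    induction n with
    | zero => simp [flattenPrefix, IsPrefixOf]
    | succ n ih => rw [flattenPrefix_succ]; exact isPrefixOf_append.mpr ⟨ih, h n⟩
  · intro h i
    have h' := h (i + 1)
    rw [flattenPrefix_succ] at h'
    exact (isPrefixOf_append.mp h').2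

lemma IsConcat.map {w : ℕ → List τ} {α : ℕ → τ} (h : IsConcat w α) (f : τ → τ') :
    IsConcat (fun i => (w i).map f) (f ∘ α) := fun i k hk => by
  simpa using congrArg f (h i k (by simpa using hk))

lemma IsConcat.ofFn_eq {w : ℕ → List τ} {α : ℕ → τ} (h : IsConcat w α) (i : ℕ) :
    List.ofFn (fun k : Fin (w i).length => α (∑ j ∈ range i, (w j).length + k)) = w i :=
  List.ext_get (by simp) fun k _ hk => by simpa using h i k hk

lemma isConcat_ofFn (ℓ : ℕ → ℕ) (α : ℕ → τ) :
    IsConcat (fun i => List.ofFn fun k : Fin (ℓ i) => α (∑ j ∈ range i, ℓ j + k)) α :=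
  fun i k hk => by simp

/-- The `m`-th letter is read off any concatenated prefix that is long enough; this is
consistent because these prefixes are totally ordered by `<+:`. -/
lemma exists_isConcat {w : ℕ → List τ} (hw : ∀ i, w i ≠ []) : ∃ α, IsConcat w α := by
  have hlong : ∀ n, n ≤ (flattenPrefix w n).length := fun n =>
    length_flattenPrefix w n ▸ le_sum_range_length hw n
  refine ⟨fun m => (flattenPrefix w (m + 1))[m]'(hlong (m + 1)), ?_⟩
  refine isConcat_iff_isPrefixOf.mpr fun n k hk => ?_
  rcases le_total n (k + 1) with hnk | hkn
  · exact ((flattenPrefix_prefix w hnk).getElem hk).symm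
  · exact (flattenPrefix_prefix w hkn).getElem _

lemma flattenPrefix_flatten {x : ℕ → List (List τ)} {γ : ℕ → List τ} (hx : IsConcat x γ)
    (n : ℕ) :
    flattenPrefix (fun i => (x i).flatten) n =
      flattenPrefix γ (∑ j ∈ range n, (x j).length) := by
  have hpre := (isConcat_iff_isPrefixOf.mp hx n).map_range_eq
  rw [length_flattenPrefix] at hpre
  rw [flattenPrefix, flattenPrefix, hpre, flattenPrefix, List.flatten_flatten, List.map_map]
  rfl

lemma isConcat_flatten_iff {x : ℕ → List (List τ)} {γ : ℕ → List τ} {β : ℕ → τ}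
    (hx : IsConcat x γ) (hne : ∀ i, x i ≠ []) :
    IsConcat (fun i => (x i).flatten) β ↔ IsConcat γ β := by
  simp only [isConcat_iff_isPrefixOf, flattenPrefix_flatten hx]
  exact ⟨fun h m => (h m).of_prefix (flattenPrefix_prefix γ (le_sum_range_length hne m)),
    fun h n => h _⟩

end OmegaWords

lemma mem_substWord_iff {σA σ : Type*} (h : σA → Set (List σ)) (w : List σA) (u : List σ) :
    u ∈ substWord h w ↔ ∃ z : List (Σ a, h a),
      z.map Sigma.fst = w ∧ (z.map fun p => (p.2 : List σ)).flatten = u := by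
  induction w generalizing u with
  | nil =>
    simp only [substWord, Set.mem_singleton_iff, List.map_eq_nil_iff]
    constructor
    · rintro rfl
      exact ⟨[], rfl, rfl⟩
    · rintro ⟨_, rfl, rfl⟩
      rfl
  | cons a t ih =>
    simp only [substWord, Set.mem_ofPred_eq, ih, List.map_eq_cons_iff]
    constructor
    · rintro ⟨x, hx, _, ⟨z, rfl, rfl⟩, rfl⟩
      exact ⟨⟨a, x, hx⟩ :: z, ⟨_, _, rfl, rfl, rfl⟩, rfl⟩
    · rintro ⟨_, ⟨⟨a, x, hx⟩, z, rfl, rfl, rfl⟩, rfl⟩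
      exact ⟨x, hx, _, ⟨z, rfl, rfl⟩, rfl⟩

lemma omegaPower_substLang_subset {σA σ : Type*} {LA : Set (List σA)}
    (hLA : ∀ w ∈ LA, w ≠ []) (h : σA → Set (List σ)) :
    omegaPower (substLang h LA) ⊆ omegaSubst h (omegaPower LA) := by
  rintro β ⟨u, hu, huβ⟩
  have hchoice : ∀ i, ∃ z : List (Σ a, h a), z.map Sigma.fst ∈ LA ∧
      (z.map fun p => (p.2 : List σ)).flatten = u i := fun i => by
    obtain ⟨w, hw, hu⟩ := Set.mem_iUnion₂.mp (hu i)
    obtain ⟨z, rfl, hz⟩ := (mem_substWord_iff h w (u i)).mp hu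
    exact ⟨z, hw, hz⟩
  choose z hzLA hzu using hchoice
  have hne : ∀ i, z i ≠ [] := fun i hi => hLA _ (hzLA i) (by simp [hi])
  obtain ⟨γ, hγ⟩ := exists_isConcat hne
  refine ⟨Sigma.fst ∘ γ, ⟨_, hzLA, IsConcat.map hγ _⟩,
    fun m => (γ m).2, fun m => (γ m).2.2, ?_⟩
  refine (isConcat_flatten_iff (IsConcat.map hγ fun p => (p.2 : List σ)) fun i => ?_).mp ?_
  · exact List.map_eq_nil_iff.not.mpr (hne i)
  · simpa only [hzu] using huβ

lemma omegaSubst_omegaPower_subset {σA σ : Type*} {LA : Set (List σA)}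
    (hLA : ∀ w ∈ LA, w ≠ []) (h : σA → Set (List σ)) :
    omegaSubst h (omegaPower LA) ⊆ omegaPower (substLang h LA) := by
  rintro β ⟨α, ⟨w, hwLA, hwα⟩, v, hv, hvβ⟩
  let γ : ℕ → Σ a, h a := fun m => ⟨α m, v m, hv m⟩
  let z : ℕ → List (Σ a, h a) := fun i =>
    List.ofFn fun k : Fin (w i).length => γ (∑ j ∈ range i, (w j).length + k)
  have hzw : ∀ i, (z i).map Sigma.fst = w i := fun i => by
    rw [List.map_ofFn]
    exact IsConcat.ofFn_eq hwα i
  refine ⟨fun i => ((z i).map fun p => (p.2 : List σ)).flatten, fun i => ?_, ?_⟩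
  · exact Set.mem_iUnion₂.mpr ⟨w i, hwLA i, (mem_substWord_iff h _ _).mpr ⟨z i, hzw i, rfl⟩⟩
  · refine (isConcat_flatten_iff (IsConcat.map (isConcat_ofFn _ γ) _) fun i => ?_).mpr hvβ
    simpa [z] using hLA _ (hwLA i)

theorem stmt12_general {σA σ : Type*}
    (LA : Set (List σA)) (hLA : ∀ w ∈ LA, w ≠ [])
    (h : σA → Set (List σ)) :
    omegaPower (substLang h LA) = omegaSubst h (omegaPower LA) :=
  (omegaPower_substLang_subset hLA h).antisymm (omegaSubst_omegaPower_subset hLA h)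

/-- If `h` is the substitution `a ↦ L₃·a` (each letter `a` of `Σ_A`, embedded in
`Σ` via `ι`, is replaced by the words of `L₃` followed by the letter `a`), and
`A = L_A^∞` is an ω-power, then `(h(L_A))^∞ = h̃(A)`: the class of ω-powers is
closed under this substitution operation. -/
theorem stmt12 {σA σ : Type*} (ι : σA → σ) (L₃ : Set (List σ))
    (LA : Set (List σA)) (hLA : ∀ w ∈ LA, w ≠ [])
    (h : σA → Set (List σ)) (hh : ∀ a : σA, h a = (fun l => l ++ [ι a]) '' L₃) :
    omegaPower (substLang h LA) = omegaSubst h (omegaPower LA) :=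
  stmt12_general LA hLA h
end
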